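/- The matrix X̂ = A^{-1/2} (A^{1/2} B A^{1/2})^{1/2} A^{-1/2}, with A = Σ_{k=1}^K R_k^{-1} and B = Σ_{k=1}^K R_k for HPD matrices R_1,…,R_K, satisfies X̂ (Σ_k R_k^{-1}) X̂ = Σ_k R_k, which is the stationarity condition for minimizing F(R) = Σ_k d_S²(R_k, R), where d_S²(X,Y) = (1/2) tr(Y^{-1}X + X^{-1}Y − 2I) is the symmetrized Kullback–Leibler divergence. -/

import Mathlib

open Matrix
open scoped ComplexOrder

open Classical in
/-- The unique positive semidefinite square root of a positive semidefinite matrix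
(junk value `1` otherwise). -/
noncomputable def msqrt {n : ℕ} (A : Matrix (Fin n) (Fin n) ℂ) : Matrix (Fin n) (Fin n) ℂ :=
  if h : A.PosSemidef then
    (h.1.eigenvectorUnitary : Matrix (Fin n) (Fin n) ℂ) *
      diagonal ((↑) ∘ (Real.sqrt ·) ∘ h.1.eigenvalues) *
      (star h.1.eigenvectorUnitary : Matrix (Fin n) (Fin n) ℂ)
  else 1

lemma msqrt_spec {n : ℕ} {A : Matrix (Fin n) (Fin n) ℂ} (h : A.PosSemidef) :
    (msqrt A).PosSemidef ∧ msqrt A * msqrt A = A := by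
  unfold msqrt
  rw [dif_pos h]
  constructor
  · have hd : (diagonal ((↑) ∘ (Real.sqrt ·) ∘ h.1.eigenvalues) :
        Matrix (Fin n) (Fin n) ℂ).PosSemidef :=
      PosSemidef.diagonal fun i => by
        simpa using Complex.zero_le_real.mpr (Real.sqrt_nonneg (h.1.eigenvalues i))
    have := hd.mul_mul_conjTranspose_same (h.1.eigenvectorUnitary : Matrix (Fin n) (Fin n) ℂ)
    simpa [Matrix.star_eq_conjTranspose] using this
  · have hU : (star h.1.eigenvectorUnitary : Matrix (Fin n) (Fin n) ℂ) *
        (h.1.eigenvectorUnitary : Matrix (Fin n) (Fin n) ℂ) = 1 := Unitary.coe_star_mul_self _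
    have hD : (diagonal ((↑) ∘ (Real.sqrt ·) ∘ h.1.eigenvalues) : Matrix (Fin n) (Fin n) ℂ) *
        diagonal ((↑) ∘ (Real.sqrt ·) ∘ h.1.eigenvalues) =
        diagonal (RCLike.ofReal ∘ h.1.eigenvalues) := by
      rw [diagonal_mul_diagonal]
      congr 1
      funext i
      simp only [Function.comp_apply]
      rw [← Complex.ofReal_mul, Real.mul_self_sqrt (h.eigenvalues_nonneg i)]
      rfl
    conv_rhs => rw [h.1.spectral_theorem, Unitary.conjStarAlgAut_apply]
    calc _ = (h.1.eigenvectorUnitary : Matrix (Fin n) (Fin n) ℂ) *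
          (diagonal ((↑) ∘ (Real.sqrt ·) ∘ h.1.eigenvalues) *
          ((star h.1.eigenvectorUnitary : Matrix (Fin n) (Fin n) ℂ) *
          (h.1.eigenvectorUnitary : Matrix (Fin n) (Fin n) ℂ)) *
          diagonal ((↑) ∘ (Real.sqrt ·) ∘ h.1.eigenvalues)) *
          (star h.1.eigenvectorUnitary : Matrix (Fin n) (Fin n) ℂ) := by
            simp only [Matrix.mul_assoc]
      _ = _ := by rw [hU, Matrix.mul_one, hD]

lemma posDef_sum {N K : ℕ} (hK : 0 < K) (M : Fin K → Matrix (Fin N) (Fin N) ℂ)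
    (hM : ∀ k, (M k).PosDef) : (∑ k, M k).PosDef := by
  constructor
  · unfold Matrix.IsHermitian
    rw [conjTranspose_sum]
    exact Finset.sum_congr rfl fun k _ => (hM k).isHermitian
  · intro x hx
    have h1 : (∑ k, M k) *ᵥ x = ∑ k, M k *ᵥ x :=
      map_sum (Matrix.mulVec.addMonoidHomLeft x) M Finset.univ
    have h2 : star x ⬝ᵥ (∑ k, M k) *ᵥ x = ∑ k, star x ⬝ᵥ M k *ᵥ x := by
      rw [h1]
      simp only [dotProduct, Finset.sum_apply, Finset.mul_sum]
      exact Finset.sum_comm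
    have : Nonempty (Fin K) := ⟨⟨0, hK⟩⟩
    exact (Matrix.posDef_sum Finset.univ_nonempty fun k _ => hM k).2 hx

theorem skld_mean_stationarity {N K : ℕ} (hK : 0 < K)
    (R : Fin K → Matrix (Fin N) (Fin N) ℂ) (hR : ∀ k, (R k).PosDef) :
    ((msqrt (∑ k, (R k)⁻¹))⁻¹ *
        msqrt (msqrt (∑ k, (R k)⁻¹) * (∑ k, R k) * msqrt (∑ k, (R k)⁻¹)) *
        (msqrt (∑ k, (R k)⁻¹))⁻¹) * (∑ k, (R k)⁻¹) *
      ((msqrt (∑ k, (R k)⁻¹))⁻¹ *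
        msqrt (msqrt (∑ k, (R k)⁻¹) * (∑ k, R k) * msqrt (∑ k, (R k)⁻¹)) *
        (msqrt (∑ k, (R k)⁻¹))⁻¹) = ∑ k, R k := by
  set A := ∑ k, (R k)⁻¹ with hAdef
  set B := ∑ k, R k with hBdef
  have hA : A.PosDef := posDef_sum hK _ fun k => (hR k).inv
  have hB : B.PosDef := posDef_sum hK _ hR
  have hAps : A.PosSemidef := hA.posSemidef
  set s := msqrt A with hsdef
  have hsps : s.PosSemidef := (msqrt_spec hAps).1
  have hss : s * s = A := (msqrt_spec hAps).2
  -- s is invertible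
  have hdet : IsUnit s.det := by
    have h2 : s.det * s.det = A.det := by rw [← det_mul, hss]
    have hAd : A.det ≠ 0 := hA.det_pos.ne'
    have : s.det ≠ 0 := fun h => hAd (by rw [← h2, h, mul_zero])
    exact this.isUnit
  have hsinv : s⁻¹ * s = 1 := Matrix.nonsing_inv_mul s hdet
  have hsinv' : s * s⁻¹ = 1 := Matrix.mul_nonsing_inv s hdet
  -- the inner square root
  have hSps : (s * B * s).PosSemidef := by
    have := hB.posSemidef.conjTranspose_mul_mul_same s
    rwa [hsps.isHermitian.eq] at this
  set S := msqrt (s * B * s) with hSdef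
  have hSS : S * S = s * B * s := (msqrt_spec hSps).2
  rw [← hss]
  calc s⁻¹ * S * s⁻¹ * (s * s) * (s⁻¹ * S * s⁻¹)
      = s⁻¹ * (S * ((s⁻¹ * s) * (s * s⁻¹)) * S) * s⁻¹ := by noncomm_ring
    _ = s⁻¹ * (S * S) * s⁻¹ := by rw [hsinv, hsinv']; noncomm_ring
    _ = (s⁻¹ * s) * B * (s * s⁻¹) := by rw [hSS]; noncomm_ring
    _ = B := by rw [hsinv, hsinv', one_mul, mul_one]
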